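/- arXiv:1106.3318 — 5 statements merged into one kernel-verified Lean document; each statement's English description precedes it below -/
import Mathlib

section
/- Every Peano continuum (with a fixed compatible metric) is uniformly locally arcwise connected: for every ε > 0 there exists δ > 0 such that any two distinct points x, y with d(x,y) < δ are joined by an arc in the space of diameter less than ε. -/
/-!
Close points `x`, `y` of a compact, locally connected metric space lie in a small connected set
(Lebesgue number of a cover by small connected open sets), hence are joined by a fine chain inside
it. Refining every link of the chain by a finer chain inside a smaller connected set, with
geometrically shrinking scales, the chains read along `t ↦ ⌊t N⌋` converge uniformly to a path of
small diameter from `x` to `y`.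

A path `f` with `f 0 ≠ f 1` contains an arc. By Zorn's lemma there is a minimal closed
`C ⊆ [0, 1]` containing `0, 1` such that `f` agrees at the two ends of each gap of `C`; by
minimality `f` identifies two points of `C` only across a gap. The Cantor-like function
`φ t = ∑ 2⁻ᵏ diam f(C ∩ [eₖ, t])`, for a dense sequence `(eₖ)` of `C`, is continuous, monotone and
collapses exactly these gaps, so `f` factors through `φ` on `C` as an injective path.
-/

/-- `A` is an arc from `x` to `y`: the homeomorphic image of `[0,1]`
whose endpoints are `x` and `y`. -/
def IsArcIn {E : Type*} [TopologicalSpace E] (A : Set E) (x y : E) : Prop :=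
  ∃ f : ℝ → E, ContinuousOn f (Set.Icc 0 1) ∧ Set.InjOn f (Set.Icc 0 1) ∧
    f '' Set.Icc 0 1 = A ∧ f 0 = x ∧ f 1 = y

open Set Metric Filter Topology

section PathsAndArcs

variable {X : Type*}

def IsGap (C : Set ℝ) (a b : ℝ) : Prop :=
  ∀ t ∈ C, t ∉ Ioo a b

def ConstOnGaps (f : ℝ → X) (C : Set ℝ) : Prop :=
  ∀ a ∈ C, ∀ b ∈ C, a ≤ b → IsGap C a b → f a = f b

theorem IsClosed.exists_isGap {s : Set ℝ} (hs : IsClosed s) {a b p q : ℝ} (ha : a ∈ s)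
    (hb : b ∈ s) (hap : a ≤ p) (hqb : q ≤ b) (hpq : IsGap s p q) :
    ∃ g ∈ s, ∃ h ∈ s, a ≤ g ∧ g ≤ p ∧ q ≤ h ∧ h ≤ b ∧ IsGap s g h := by
  have hL : BddAbove (s ∩ Icc a p) := bddAbove_Icc.mono inter_subset_right
  have hR : BddBelow (s ∩ Icc q b) := bddBelow_Icc.mono inter_subset_right
  obtain ⟨hg, hag, hgp⟩ := (hs.inter isClosed_Icc).csSup_mem ⟨a, ha, le_rfl, hap⟩ hL
  obtain ⟨hh, hqh, hhb⟩ := (hs.inter isClosed_Icc).csInf_mem ⟨b, hb, hqb, le_rfl⟩ hR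
  refine ⟨_, hg, _, hh, hag, hgp, hqh, hhb, fun t ht ⟨hgt, hth⟩ => ?_⟩
  rcases le_or_gt t p with htp | hpt
  · exact hgt.not_ge (le_csSup hL ⟨ht, hag.trans hgt.le, htp⟩)
  rcases le_or_gt q t with hqt | htq
  · exact hth.not_ge (csInf_le hR ⟨ht, hqt, hth.le.trans hhb⟩)
  exact hpq t ht ⟨hpt, htq⟩

theorem Monotone.uniformContinuous_of_le_add {φ : ℝ → ℝ} (hφ : Monotone φ)
    (h : ∀ η > 0, ∃ d > 0, ∀ s t, s ≤ t → t - s < d → φ t ≤ φ s + η) : UniformContinuous φ := by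
  refine Metric.uniformContinuous_iff.2 fun ε hε => ?_
  obtain ⟨d, hd, hφd⟩ := h (ε / 2) (half_pos hε)
  refine ⟨d, hd, fun {s t} hst => ?_⟩
  rw [Real.dist_eq] at hst ⊢
  obtain ⟨hst₁, hst₂⟩ := abs_sub_lt_iff.1 hst
  rcases le_total s t with h | h
  · rw [abs_sub_comm, abs_of_nonneg (sub_nonneg.2 (hφ h))]
    linarith [hφd s t h hst₂]
  · rw [abs_of_nonneg (sub_nonneg.2 (hφ h))]
    linarith [hφd t s h hst₁]

section Gaps

variable {f : ℝ → X} {C : Set ℝ}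

theorem constOnGaps_Icc : ConstOnGaps f (Icc 0 1) := by
  intro a ha b hb hab hgap
  obtain rfl | hab := hab.eq_or_lt
  · rfl
  exact absurd ⟨by linarith, by linarith⟩
    (hgap ((a + b) / 2) ⟨by linarith [ha.1], by linarith [hb.2]⟩)

theorem ConstOnGaps.diff_Ioo (hgap : ConstOnGaps f C) {a b : ℝ} (ha : a ∈ C) (hb : b ∈ C)
    (hfab : f a = f b) : ConstOnGaps f (C \ Ioo a b) := by
  intro p hp q hq hpq hpq_gap
  by_cases hC : IsGap C p q
  · exact hgap p hp.1 q hq.1 hpq hC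
  obtain ⟨u, huC, hu⟩ : ∃ u ∈ C, u ∈ Ioo p q := by simpa [IsGap] using hC
  have hu_ab : u ∈ Ioo a b := by_contra fun h => hpq_gap u ⟨huC, h⟩ hu
  have hap : a ≤ p := not_lt.1 fun h => hpq_gap a ⟨ha, fun h' => h'.1.false⟩ ⟨h, hu_ab.1.trans hu.2⟩
  have hqb : q ≤ b := not_lt.1 fun h => hpq_gap b ⟨hb, fun h' => h'.2.false⟩ ⟨hu.1.trans hu_ab.2, h⟩
  have hpa : p ≤ a := not_lt.1 fun h => hp.2 ⟨h, hu.1.trans hu_ab.2⟩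
  have hbq : b ≤ q := not_lt.1 fun h => hq.2 ⟨hu_ab.1.trans hu.2, h⟩
  rwa [le_antisymm hpa hap, le_antisymm hqb hbq]

theorem ConstOnGaps.exists_mem_Ioo_lt (hgap : ConstOnGaps f C) {a b : ℝ} (ha : a ∈ C) (hb : b ∈ C)
    (hab : a ≤ b) (hfab : f a ≠ f b) : ∃ c₀ ∈ C, ∃ c₁ ∈ C, a < c₀ ∧ c₀ < c₁ ∧ c₁ < b := by
  obtain ⟨c, hc, hac, hcb⟩ : ∃ c ∈ C, c ∈ Ioo a b := by
    by_contra! h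
    exact hfab (hgap a ha b hb hab h)
  by_contra! h
  refine hfab ((hgap a ha c hc hac.le fun t ht htc => ?_).trans
    (hgap c hc b hb hcb.le fun t ht htc => ?_))
  · exact (h t ht c hc htc.1 htc.2).not_gt hcb
  · exact (h c hc t ht hac htc.1).not_gt htc.2

theorem ConstOnGaps.Icc_subset_image (hgap : ConstOnGaps f C) (hC : IsClosed C) {Φ : ℝ → ℝ}
    (hΦ : Continuous Φ) (hΦm : Monotone Φ) (hΦf : ∀ a ∈ C, ∀ b ∈ C, f a = f b → Φ a = Φ b)
    {a b : ℝ} (ha : a ∈ C) (hb : b ∈ C) (hab : a ≤ b) : Icc (Φ a) (Φ b) ⊆ Φ '' C := by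
  rintro u ⟨hau, hub⟩
  set T := C ∩ Icc a b ∩ Φ ⁻¹' Iic u
  set B := C ∩ Icc a b ∩ Φ ⁻¹' Ici u
  have hK : IsClosed (C ∩ Icc a b) := hC.inter isClosed_Icc
  have hT : BddAbove T := bddAbove_Icc.mono (inter_subset_left.trans inter_subset_right)
  have hB : BddBelow B := bddBelow_Icc.mono (inter_subset_left.trans inter_subset_right)
  obtain ⟨⟨hgC, hag, -⟩, hgu⟩ := (hK.inter (isClosed_Iic.preimage hΦ)).csSup_mem
    ⟨a, ⟨ha, le_rfl, hab⟩, hau⟩ hT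
  obtain ⟨⟨hhC, -, hhb⟩, hhu⟩ := (hK.inter (isClosed_Ici.preimage hΦ)).csInf_mem
    ⟨b, ⟨hb, hab, le_rfl⟩, hub⟩ hB
  refine ⟨_, hgC, le_antisymm hgu ?_⟩
  rcases le_or_gt (sInf B) (sSup T) with hhg | hgh
  · exact (show u ≤ _ from hhu).trans (hΦm hhg)
  -- the largest parameter below level `u` and the smallest one above it bound a gap of `C`
  refine (show u ≤ _ from hhu).trans_eq (hΦf _ hhC _ hgC ?_)
  refine (hgap _ hgC _ hhC hgh.le fun t ht ⟨hgt, hth⟩ => ?_).symm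
  rcases le_total (Φ t) u with htu | hut
  · exact hgt.not_ge (le_csSup hT ⟨⟨ht, hag.trans hgt.le, hth.le.trans hhb⟩, htu⟩)
  · exact hth.not_ge (csInf_le hB ⟨⟨ht, hag.trans hgt.le, hth.le.trans hhb⟩, hut⟩)

/-- A closed set of parameters from which the path `f` can be read off as an arc. -/
structure IsArcDomain (f : ℝ → X) (C : Set ℝ) : Prop where
  subset_Icc : C ⊆ Icc 0 1
  isClosed : IsClosed C
  zero_mem : (0 : ℝ) ∈ C
  one_mem : (1 : ℝ) ∈ C
  constOnGaps : ConstOnGaps f C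
  isGap_of_eq : ∀ a ∈ C, ∀ b ∈ C, a < b → f a = f b → IsGap C a b

end Gaps

section Metric

variable [MetricSpace X] {f : ℝ → X} {C : Set ℝ}

theorem constOnGaps_sInter (hf : ContinuousOn f (Icc 0 1)) {c : Set (Set ℝ)} (hne : c.Nonempty)
    (hchain : IsChain (· ⊆ ·) c) (hc : ∀ s ∈ c, s ⊆ Icc 0 1 ∧ IsClosed s ∧ ConstOnGaps f s) :
    ConstOnGaps f (⋂₀ c) := by
  intro a ha b hb hab hgap
  obtain ⟨s₀, hs₀⟩ := hne
  obtain rfl | hab := hab.eq_or_lt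
  · rfl
  have ha01 := (hc s₀ hs₀).1 (ha s₀ hs₀)
  have hb01 := (hc s₀ hs₀).1 (hb s₀ hs₀)
  refine eq_of_forall_dist_le fun η hη => ?_
  obtain ⟨d, hd, hfd⟩ := Metric.uniformContinuousOn_iff.mp
    (isCompact_Icc.uniformContinuousOn_of_continuous hf) (η / 2) (half_pos hη)
  obtain ⟨r, hr0, hrd, hrab⟩ : ∃ r, 0 < r ∧ r < d ∧ r ≤ (b - a) / 2 :=
    ⟨min (d / 2) ((b - a) / 2), lt_min (half_pos hd) (by linarith),
      (min_le_left _ _).trans_lt (half_lt_self hd), min_le_right _ _⟩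
  -- by compactness, a single member of the chain already misses `[a + r, b - r]`
  obtain ⟨s, hs, hsK⟩ : ∃ s ∈ c, ∀ t ∈ s, t ∉ Icc (a + r) (b - r) := by
    have : Nonempty c := ⟨⟨s₀, hs₀⟩⟩
    have hempty : Icc (a + r) (b - r) ∩ ⋂ s : c, (s : Set ℝ) = ∅ :=
      eq_empty_of_forall_notMem fun t ⟨htK, ht⟩ => hgap t (fun s hs => mem_iInter.1 ht ⟨s, hs⟩)
        ⟨by linarith [htK.1], by linarith [htK.2]⟩
    obtain ⟨⟨s, hs⟩, hK⟩ := isCompact_Icc.elim_directed_family_closed _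
      (fun s : c => (hc s s.2).2.1) hempty fun i j =>
        (hchain.total i.2 j.2).elim (fun h => ⟨i, subset_rfl, h⟩) fun h => ⟨j, h, subset_rfl⟩
    exact ⟨s, hs, fun t ht htK => hK.subset ⟨htK, ht⟩⟩
  obtain ⟨g, hg, h, hh, hag, hgr, hrh, hhb, hgh⟩ := (hc s hs).2.1.exists_isGap (ha s hs) (hb s hs)
    (p := a + r) (q := b - r) (by linarith) (by linarith)
    fun t ht htI => hsK t ht (Ioo_subset_Icc_self htI)
  have hfgh : f g = f h := (hc s hs).2.2 g hg h hh (by linarith) hgh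
  have hg01 : g ∈ Icc (0 : ℝ) 1 := ⟨ha01.1.trans hag, by linarith [hb01.2]⟩
  have hh01 : h ∈ Icc (0 : ℝ) 1 := ⟨by linarith [ha01.1], hhb.trans hb01.2⟩
  calc dist (f a) (f b) ≤ dist (f a) (f g) + dist (f h) (f b) := by
        rw [hfgh]; exact dist_triangle _ _ _
    _ ≤ η / 2 + η / 2 := by
        gcongr
        · exact (hfd a ha01 g hg01 (by rw [Real.dist_eq, abs_lt]; constructor <;> linarith)).le
        · exact (hfd h hh01 b hb01 (by rw [Real.dist_eq, abs_lt]; constructor <;> linarith)).le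
    _ = η := add_halves η

theorem exists_isArcDomain (hf : ContinuousOn f (Icc 0 1)) :
    ∃ C, IsArcDomain f C := by
  let S : Set (Set ℝ) :=
    {C | C ⊆ Icc 0 1 ∧ IsClosed C ∧ (0 : ℝ) ∈ C ∧ (1 : ℝ) ∈ C ∧ ConstOnGaps f C}
  have hIcc : Icc (0 : ℝ) 1 ∈ S :=
    ⟨subset_rfl, isClosed_Icc, left_mem_Icc.2 zero_le_one, right_mem_Icc.2 zero_le_one,
      constOnGaps_Icc⟩
  obtain ⟨M, hM⟩ := zorn_superset S fun c hcS hc => by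
    rcases c.eq_empty_or_nonempty with rfl | hne
    · exact ⟨Icc 0 1, hIcc, by simp⟩
    obtain ⟨s₀, hs₀⟩ := hne
    refine ⟨⋂₀ c, ⟨(sInter_subset_of_mem hs₀).trans (hcS hs₀).1,
      isClosed_sInter fun s hs => (hcS hs).2.1, fun s hs => (hcS hs).2.2.1,
      fun s hs => (hcS hs).2.2.2.1, constOnGaps_sInter hf ⟨s₀, hs₀⟩ hc
        fun s hs => ⟨(hcS hs).1, (hcS hs).2.1, (hcS hs).2.2.2.2⟩⟩,
      fun s hs => sInter_subset_of_mem hs⟩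
  obtain ⟨hMsub, hMcl, hM0, hM1, hMgap⟩ := hM.prop
  refine ⟨M, ⟨hMsub, hMcl, hM0, hM1, hMgap, fun a ha b hb hab hfab t ht htab => ?_⟩⟩
  -- cutting the loop `(a, b)` out of `M` stays in `S`, so by minimality there was nothing to cut
  have hcut : M \ Ioo a b ∈ S :=
    ⟨sdiff_subset.trans hMsub, hMcl.sdiff isOpen_Ioo, ⟨hM0, fun h => (hMsub ha).1.not_gt h.1⟩,
      ⟨hM1, fun h => (hMsub hb).2.not_gt h.2⟩, hMgap.diff_Ioo ha hb hfab⟩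
  exact (hM.2 hcut sdiff_subset ht).2 htab

theorem diam_image_inter_Icc_le_add (hC : C ⊆ Icc 0 1) (hCcl : IsClosed C)
    (hgap : ConstOnGaps f C) (hbdd : Bornology.IsBounded (f '' C)) {η d : ℝ} (hη : 0 ≤ η)
    (hd : ∀ a ∈ Icc (0 : ℝ) 1, ∀ b ∈ Icc (0 : ℝ) 1, dist a b < d → dist (f a) (f b) < η)
    (e : ℝ) {s t : ℝ} (hts : t - s < d) :
    diam (f '' (C ∩ Icc e t)) ≤ diam (f '' (C ∩ Icc e s)) + 2 * η := by
  have hd' : ∀ p ∈ C, ∀ q ∈ C, s ≤ p → p ≤ t → s ≤ q → q ≤ t → dist (f p) (f q) ≤ η :=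
    fun p hp q hq hsp hpt hsq hqt => (hd p (hC hp) q (hC hq)
      (by rw [Real.dist_eq, abs_lt]; constructor <;> linarith)).le
  rcases (C ∩ Icc e s).eq_empty_or_nonempty with hA | ⟨a, haC, hea, has⟩
  · have hs : ∀ p ∈ C ∩ Icc e t, s ≤ p := fun p ⟨hpC, hep, _⟩ =>
      le_of_not_ge fun hps => hA.subset ⟨hpC, hep, hps⟩
    refine (diam_le_of_forall_dist_le hη ?_).trans
      (le_add_of_nonneg_of_le diam_nonneg (by linarith))
    rintro _ ⟨p, hp, rfl⟩ _ ⟨q, hq, rfl⟩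
    exact hd' p hp.1 q hq.1 (hs p hp) hp.2.2 (hs q hq) hq.2.2
  -- a point `p > s` is `η`-close to the far end `h` of the gap `(g, h)` of `C` around `s`,
  -- and `f h = f g` is a value already taken on `[e, s]`
  refine (diam_mono ?_ ((hbdd.subset (image_mono inter_subset_left)).cthickening)).trans
    (diam_cthickening_le _ hη)
  rintro _ ⟨p, ⟨hpC, hep, hpt⟩, rfl⟩
  rcases le_or_gt p s with hps | hsp
  · exact self_subset_cthickening _ (mem_image_of_mem f ⟨hpC, hep, hps⟩)
  obtain ⟨g, hg, h, hh, hag, hgs, hsh, hhp, hgh⟩ :=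
    hCcl.exists_isGap haC hpC has hsp.le fun _ _ ht => ht.1.not_gt ht.2
  refine mem_cthickening_of_dist_le _ (f g) η _ (mem_image_of_mem f ⟨hg, hea.trans hag, hgs⟩) ?_
  rw [hgap g hg h hh (hgs.trans hsh) hgh]
  exact hd' p hpC h hh hsp.le hpt hsh (hhp.trans hpt)

theorem continuous_diam_image_inter_Icc (hf : ContinuousOn f (Icc 0 1)) (hC : C ⊆ Icc 0 1)
    (hCcl : IsClosed C) (hgap : ConstOnGaps f C) (e : ℝ) :
    Continuous fun t => diam (f '' (C ∩ Icc e t)) := by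
  have hbdd : Bornology.IsBounded (f '' C) :=
    (isCompact_Icc.image_of_continuousOn hf).isBounded.subset (image_mono hC)
  refine (Monotone.uniformContinuous_of_le_add (fun s t hst => ?_) fun η hη => ?_).continuous
  · exact diam_mono (image_mono (inter_subset_inter_right _ (Icc_subset_Icc_right hst)))
      (hbdd.subset (image_mono inter_subset_left))
  obtain ⟨d, hd, hfd⟩ := Metric.uniformContinuousOn_iff.mp
    (isCompact_Icc.uniformContinuousOn_of_continuous hf) (η / 2) (half_pos hη)
  refine ⟨d, hd, fun s t _ hts => ?_⟩
  linarith [diam_image_inter_Icc_le_add hC hCcl hgap hbdd (half_pos hη).le hfd e hts]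

theorem IsArcDomain.diam_image_inter_Icc_eq (hC : IsArcDomain f C) {a b : ℝ} (ha : a ∈ C)
    (hb : b ∈ C) (hab : a < b) (hfab : f a = f b) (e : ℝ) :
    diam (f '' (C ∩ Icc e a)) = diam (f '' (C ∩ Icc e b)) := by
  have hgap := hC.isGap_of_eq a ha b hb hab hfab
  have hb_of : ∀ p ∈ C, a < p → p ≤ b → p = b := fun p hp hap hpb =>
    hpb.eq_or_lt.resolve_right fun hpb => hgap p hp ⟨hap, hpb⟩
  rcases le_or_gt e a with hea | hae
  · congr 1
    refine (image_mono (inter_subset_inter_right _ (Icc_subset_Icc_right hab.le))).antisymm ?_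
    rintro _ ⟨p, ⟨hpC, hep, hpb⟩, rfl⟩
    rcases le_or_gt p a with hpa | hap
    · exact mem_image_of_mem f ⟨hpC, hep, hpa⟩
    · rw [hb_of p hpC hap hpb, ← hfab]
      exact mem_image_of_mem f ⟨ha, hea, le_rfl⟩
  · rw [Icc_eq_empty hae.not_ge, inter_empty, image_empty, diam_empty]
    refine (diam_subsingleton (Subsingleton.image ?_ f)).symm
    exact subsingleton_singleton.anti fun p ⟨hpC, hep, hpb⟩ => hb_of p hpC (hae.trans_le hep) hpb

theorem IsArcDomain.exists_lt_diam_pos (hf : ContinuousOn f (Icc 0 1)) (hC : IsArcDomain f C)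
    {e : ℕ → C} (he : DenseRange e) {a b : ℝ} (ha : a ∈ C) (hb : b ∈ C) (hab : a < b)
    (hfab : f a ≠ f b) : ∃ k, a < e k ∧ 0 < diam (f '' (C ∩ Icc (e k : ℝ) b)) := by
  obtain ⟨c₀, hc₀, c₁, hc₁, hac₀, hc₀₁, hc₁b⟩ :=
    hC.constOnGaps.exists_mem_Ioo_lt ha hb hab.le hfab
  obtain ⟨k, hak, hkc₁⟩ := he.exists_mem_open (isOpen_Ioo.preimage continuous_subtype_val)
    ⟨⟨c₀, hc₀⟩, hac₀, hc₀₁⟩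
  have hkb : (e k : ℝ) ≤ b := (hkc₁.trans hc₁b).le
  have hfk : f (e k) ≠ f b := fun h =>
    hC.isGap_of_eq _ (e k).2 b hb (hkc₁.trans hc₁b) h c₁ hc₁ ⟨hkc₁, hc₁b⟩
  refine ⟨k, hak, (dist_pos.2 hfk).trans_le (dist_le_diam_of_mem ?_
    (mem_image_of_mem f ⟨(e k).2, le_rfl, hkb⟩) (mem_image_of_mem f ⟨hb, hkb, le_rfl⟩))⟩
  exact (isCompact_Icc.image_of_continuousOn hf).isBounded.subset
    (image_mono (inter_subset_left.trans hC.subset_Icc))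

theorem IsArcDomain.exists_monotone_continuous (hf : ContinuousOn f (Icc 0 1))
    (hC : IsArcDomain f C) :
    ∃ φ : ℝ → ℝ, Continuous φ ∧ Monotone φ ∧ ∀ a ∈ C, ∀ b ∈ C, φ a = φ b ↔ f a = f b := by
  have : Nonempty C := ⟨⟨0, hC.zero_mem⟩⟩
  obtain ⟨e, he⟩ := TopologicalSpace.exists_dense_seq C
  set ρ : ℕ → ℝ → ℝ := fun k t => diam (f '' (C ∩ Icc (e k : ℝ) t)) with hρ
  set D := diam (f '' Icc 0 1)
  have hbdd : Bornology.IsBounded (f '' Icc 0 1) :=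
    (isCompact_Icc.image_of_continuousOn hf).isBounded
  have hρD : ∀ k t, ρ k t ≤ D := fun k t =>
    diam_mono (image_mono (inter_subset_left.trans hC.subset_Icc)) hbdd
  have hρmono : ∀ k, Monotone (ρ k) := fun k s t hst =>
    diam_mono (image_mono (inter_subset_inter_right _ (Icc_subset_Icc_right hst)))
      (hbdd.subset (image_mono (inter_subset_left.trans hC.subset_Icc)))
  have hsum : Summable fun k : ℕ => (1 / 2 : ℝ) ^ k * D := summable_geometric_two.mul_right _
  have hsumt : ∀ t, Summable fun k => (1 / 2 : ℝ) ^ k * ρ k t := fun t =>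
    hsum.of_nonneg_of_le (fun k => by positivity)
      fun k => mul_le_mul_of_nonneg_left (hρD k t) (by positivity)
  have hlt : ∀ a ∈ C, ∀ b ∈ C, a < b → f a ≠ f b →
      ∑' k, (1 / 2 : ℝ) ^ k * ρ k a < ∑' k, (1 / 2 : ℝ) ^ k * ρ k b := by
    intro a ha b hb hab hfab
    obtain ⟨k, hak, hρb⟩ := hC.exists_lt_diam_pos hf he ha hb hab hfab
    have hρa : ρ k a = 0 := by
      simp only [hρ, Icc_eq_empty hak.not_ge, inter_empty, image_empty, diam_empty]
    refine Summable.tsum_lt_tsum_of_nonneg (i := k) (fun k => by positivity)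
      (fun k => mul_le_mul_of_nonneg_left (hρmono k hab.le) (by positivity)) ?_ (hsumt b)
    rw [hρa, mul_zero]
    positivity
  have heq : ∀ a ∈ C, ∀ b ∈ C, a < b → f a = f b →
      ∑' k, (1 / 2 : ℝ) ^ k * ρ k a = ∑' k, (1 / 2 : ℝ) ^ k * ρ k b := fun a ha b hb hab hfab =>
    tsum_congr fun k => congrArg _ (hC.diam_image_inter_Icc_eq ha hb hab hfab _)
  refine ⟨fun t => ∑' k, (1 / 2 : ℝ) ^ k * ρ k t, ?_, fun s t hst => ?_, fun a ha b hb => ?_⟩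
  · refine continuous_tsum (fun k => continuous_const.mul (continuous_diam_image_inter_Icc hf
      hC.subset_Icc hC.isClosed hC.constOnGaps _)) hsum fun k t => ?_
    rw [Real.norm_of_nonneg (by positivity)]
    exact mul_le_mul_of_nonneg_left (hρD k t) (by positivity)
  · exact (hsumt s).tsum_le_tsum (fun k => mul_le_mul_of_nonneg_left (hρmono k hst)
      (by positivity)) (hsumt t)
  rcases lt_trichotomy a b with hab | rfl | hab
  · exact ⟨not_imp_not.1 fun h => (hlt a ha b hb hab h).ne, heq a ha b hb hab⟩
  · simp
  · exact ⟨not_imp_not.1 fun h => (hlt b hb a ha hab (Ne.symm h)).ne',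
      fun h => (heq b hb a ha hab h.symm).symm⟩

theorem exists_isArcIn_of_factor (hC : IsCompact C) (hf : ContinuousOn f C) {Φ : ℝ → ℝ}
    (hΦ : ContinuousOn Φ C) (hmaps : MapsTo Φ C (Icc 0 1)) (hsurj : Icc 0 1 ⊆ Φ '' C)
    (hΦf : ∀ a ∈ C, ∀ b ∈ C, Φ a = Φ b ↔ f a = f b) {a b : ℝ} (ha : a ∈ C) (hb : b ∈ C)
    (hΦa : Φ a = 0) (hΦb : Φ b = 1) : ∃ A, IsArcIn A (f a) (f b) ∧ A ⊆ f '' C := by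
  have : CompactSpace C := isCompact_iff_compactSpace.mp hC
  let π : C → Icc (0 : ℝ) 1 := fun t => ⟨Φ t, hmaps t.2⟩
  have hπ : Continuous π := (continuousOn_iff_continuous_domRestrict.mp hΦ).subtype_mk _
  have hπs : Function.Surjective π := fun u => by
    obtain ⟨t, ht, htu⟩ := hsurj u.2
    exact ⟨⟨t, ht⟩, Subtype.ext htu⟩
  obtain ⟨σ, hσ⟩ := hπs.hasRightInverse
  let F : Icc (0 : ℝ) 1 → X := fun u => f (σ u)
  have hσΦ : ∀ u, Φ (σ u) = u := fun u => congrArg Subtype.val (hσ u)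
  -- `π` is a closed map from a compact space, hence a quotient map, and `F ∘ π = f`
  have hF : Continuous F := by
    refine ((hπ.isClosedMap).isQuotientMap hπ hπs).continuous_iff.mpr ?_
    convert continuousOn_iff_continuous_domRestrict.mp hf using 1
    exact funext fun t => (hΦf _ (σ (π t)).2 _ t.2).1 (hσΦ (π t))
  have hF_eq : ∀ (u : Icc (0 : ℝ) 1) t, t ∈ C → Φ t = u → F u = f t := fun u t ht htu =>
    (hΦf _ (σ u).2 _ ht).1 (by rw [hσΦ, htu])
  refine ⟨IccExtend zero_le_one F '' Icc 0 1, ⟨IccExtend zero_le_one F, hF.Icc_extend'.continuousOn,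
    fun u hu v hv huv => ?_, rfl, ?_, ?_⟩, ?_⟩
  · rw [IccExtend_of_mem _ _ hu, IccExtend_of_mem _ _ hv] at huv
    have := (hΦf _ (σ _).2 _ (σ _).2).2 huv
    rwa [hσΦ, hσΦ] at this
  · rw [IccExtend_left]
    exact hF_eq _ a ha hΦa
  · rw [IccExtend_right]
    exact hF_eq _ b hb hΦb
  · rintro _ ⟨u, hu, rfl⟩
    rw [IccExtend_of_mem _ _ hu]
    exact mem_image_of_mem f (σ _).2

theorem IsArcDomain.exists_isArcIn (hf : ContinuousOn f (Icc 0 1)) (hC : IsArcDomain f C)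
    (hne : f 0 ≠ f 1) : ∃ A, IsArcIn A (f 0) (f 1) ∧ A ⊆ f '' Icc 0 1 := by
  obtain ⟨φ, hφ, hφm, hφf⟩ := hC.exists_monotone_continuous hf
  have hφ01 : φ 0 < φ 1 :=
    (hφm zero_le_one).lt_of_ne fun h => hne ((hφf 0 hC.zero_mem 1 hC.one_mem).1 h)
  have hden : 0 < φ 1 - φ 0 := sub_pos.2 hφ01
  set Φ : ℝ → ℝ := fun t => (φ t - φ 0) / (φ 1 - φ 0)
  have hΦm : Monotone Φ := fun s t hst =>
    div_le_div_of_nonneg_right (sub_le_sub_right (hφm hst) _) hden.le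
  have hΦ0 : Φ 0 = 0 := by simp [Φ]
  have hΦ1 : Φ 1 = 1 := div_self hden.ne'
  have hΦf : ∀ a ∈ C, ∀ b ∈ C, Φ a = Φ b ↔ f a = f b := fun a ha b hb => by
    rw [← hφf a ha b hb, div_left_inj' hden.ne', sub_left_inj]
  have hΦ : Continuous Φ := (hφ.sub continuous_const).div_const _
  have hCc : IsCompact C := isCompact_Icc.of_isClosed_subset hC.isClosed hC.subset_Icc
  obtain ⟨A, hA, hAC⟩ := exists_isArcIn_of_factor hCc (hf.mono hC.subset_Icc) hΦ.continuousOn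
    (fun t ht => ⟨hΦ0 ▸ hΦm (hC.subset_Icc ht).1, hΦ1 ▸ hΦm (hC.subset_Icc ht).2⟩)
    (hΦ0 ▸ hΦ1 ▸ hC.constOnGaps.Icc_subset_image hC.isClosed hΦ hΦm
      (fun a ha b hb => (hΦf a ha b hb).2) hC.zero_mem hC.one_mem zero_le_one)
    hΦf hC.zero_mem hC.one_mem hΦ0 hΦ1
  exact ⟨A, hA, hAC.trans (image_mono hC.subset_Icc)⟩

theorem ContinuousOn.exists_isArcIn_subset_image (hf : ContinuousOn f (Icc 0 1))
    (hne : f 0 ≠ f 1) : ∃ A, IsArcIn A (f 0) (f 1) ∧ A ⊆ f '' Icc 0 1 :=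
  let ⟨_, hC⟩ := exists_isArcDomain hf
  hC.exists_isArcIn hf hne

end Metric

section Chains

variable [MetricSpace X]

def IsDistChain (θ : ℝ) (N : ℕ) (u : ℕ → X) (x y : X) : Prop :=
  u 0 = x ∧ (∀ i, N ≤ i → u i = y) ∧ ∀ i, dist (u i) (u (i + 1)) < θ

theorem isDistChain_pair {θ : ℝ} (hθ : 0 < θ) {x y : X} (hxy : dist x y < θ) :
    IsDistChain θ 1 (fun i => if i = 0 then x else y) x y :=
  ⟨rfl, fun i hi => if_neg (by omega), fun i => by
    rcases i with _ | i
    · simpa using hxy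
    · simpa using hθ⟩

theorem IsDistChain.append {θ : ℝ} {L L' : ℕ} {c d : ℕ → X} {p q r : X}
    (hc : IsDistChain θ L c p q) (hd : IsDistChain θ L' d q r) :
    IsDistChain θ (L + L') (fun i => if i ≤ L then c i else d (i - L)) p r := by
  obtain ⟨hc0, hcL, hcs⟩ := hc
  obtain ⟨hd0, hdL, hds⟩ := hd
  refine ⟨by simp [hc0], fun i hi => ?_, fun i => ?_⟩ <;> dsimp only
  · split_ifs with h
    · rw [hcL i (by omega), ← hd0, hdL 0 (by omega)]
    · exact hdL _ (by omega)
  rcases lt_trichotomy i L with h | rfl | h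
  · rw [if_pos h.le, if_pos (show i + 1 ≤ L from h)]
    exact hcs i
  · rw [if_pos le_rfl, if_neg (by omega), hcL i le_rfl, Nat.add_sub_cancel_left, ← hd0]
    exact hds 0
  · rw [if_neg (by omega), if_neg (by omega), show i + 1 - L = i - L + 1 by omega]
    exact hds _

theorem IsPreconnected.exists_isDistChain {S : Set X} (hS : IsPreconnected S) {θ : ℝ}
    (hθ : 0 < θ) {p q : X} (hp : p ∈ S) (hq : q ∈ S) :
    ∃ N u, IsDistChain θ N u p q ∧ ∀ i, u i ∈ S := by
  refine hS.induction₂' (fun p q => ∃ N u, IsDistChain θ N u p q ∧ ∀ i, u i ∈ S)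
    (fun p hp => ?_) (fun p q r _ _ _ ⟨N, u, hu, huS⟩ ⟨N', u', hu', hu'S⟩ =>
      ⟨_, _, hu.append hu', fun i => by split_ifs <;> simp only [huS, hu'S]⟩) hp hq
  have hpair : ∀ {p q}, p ∈ S → q ∈ S → ∀ i, (if i = 0 then p else q) ∈ S := fun hp hq i => by
    split_ifs <;> assumption
  filter_upwards [inter_mem_nhdsWithin S (ball_mem_nhds p hθ), self_mem_nhdsWithin] with q hq hqS
  exact ⟨⟨1, _, isDistChain_pair hθ (mem_ball'.1 hq.2), hpair hp hqS⟩,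
    ⟨1, _, isDistChain_pair hθ (mem_ball.1 hq.2), hpair hqS hp⟩⟩

theorem IsDistChain.dist_floor_lt {θ : ℝ} {N : ℕ} {u : ℕ → X} {x y : X}
    (hu : IsDistChain θ N u x y) {s t : ℝ} (hs : 0 ≤ s) (hst : s ≤ t) (h : (t - s) * N < 1) :
    dist (u ⌊s * N⌋₊) (u ⌊t * N⌋₊) < θ := by
  have hle : ⌊s * N⌋₊ ≤ ⌊t * N⌋₊ := Nat.floor_le_floor (by gcongr)
  have hlt : ⌊t * N⌋₊ < ⌊s * N⌋₊ + 2 := by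
    rw [Nat.floor_lt (mul_nonneg (hs.trans hst) N.cast_nonneg)]
    push_cast
    linarith [Nat.lt_floor_add_one (s * N)]
  obtain heq | heq : ⌊t * N⌋₊ = ⌊s * N⌋₊ ∨ ⌊t * N⌋₊ = ⌊s * N⌋₊ + 1 := by omega
  · rw [heq, dist_self]
    exact dist_nonneg.trans_lt (hu.2.2 0)
  · rw [heq]
    exact hu.2.2 _

theorem isDistChain_blocks {θ : ℝ} {N M : ℕ} (hM : 0 < M) {u : ℕ → X} {y : X}
    (huN : ∀ i, N ≤ i → u i = y) {L : ℕ → ℕ} {c : ℕ → ℕ → X}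
    (hc : ∀ j, IsDistChain θ (L j) (c j) (u j) (u (j + 1))) (hLM : ∀ j, L j ≤ M)
    (hL : ∀ j, N ≤ j → L j = 0) : IsDistChain θ (N * M) (fun i => c (i / M) (i % M)) (u 0) y := by
  have hnext : ∀ i, c ((i + 1) / M) ((i + 1) % M) = c (i / M) (i % M + 1) := by
    intro i
    have hi := Nat.div_add_mod i M
    have hr := Nat.mod_lt i hM
    by_cases hr1 : i % M + 1 < M
    · have : i + 1 = M * (i / M) + (i % M + 1) := by omega
      rw [this, Nat.mul_add_div hM, Nat.mul_add_mod, Nat.div_eq_of_lt hr1, Nat.mod_eq_of_lt hr1,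
        add_zero]
    · have : i + 1 = M * (i / M + 1) := by rw [Nat.mul_succ]; omega
      rw [this, Nat.mul_div_cancel_left _ hM, Nat.mul_mod_right, (hc _).1,
        show i % M + 1 = M by omega, (hc _).2.1 M (hLM _)]
  refine ⟨by simp [(hc 0).1], fun i hi => ?_, fun i => ?_⟩
  · have hj : N ≤ i / M := (Nat.le_div_iff_mul_le hM).2 hi
    show c _ _ = y
    rw [(hc _).2.1 _ (by rw [hL _ hj]; exact Nat.zero_le _), huN _ (by omega)]
  · show dist (c _ _) (c ((i + 1) / M) ((i + 1) % M)) < θ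
    rw [hnext]
    exact (hc _).2.2 _

/-- Every step of `u` is replaced by a `θ'`-chain inside a small preconnected set; padding all of
them to a common length `M` makes the old index `j` the block `[j M, (j + 1) M)` of the new
chain, which the floors `⌊t N⌋` and `⌊t N M⌋` both see. -/
theorem IsDistChain.refine {θ θ' β : ℝ} (hθ' : 0 < θ')
    (hjoin : ∀ p q : X, dist p q < θ →
      ∃ S, IsPreconnected S ∧ p ∈ S ∧ q ∈ S ∧ S ⊆ closedBall p β)
    {N : ℕ} {u : ℕ → X} {x y : X} (hu : IsDistChain θ N u x y) :
    ∃ N' u', IsDistChain θ' N' u' x y ∧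
      ∀ t ∈ Icc (0 : ℝ) 1, dist (u' ⌊t * N'⌋₊) (u ⌊t * N⌋₊) ≤ β := by
  obtain ⟨rfl, huN, hstep⟩ := hu
  have hlink : ∀ j, ∃ L c, IsDistChain θ' L c (u j) (u (j + 1)) ∧
      (∀ i, dist (c i) (u j) ≤ β) ∧ (N ≤ j → L = 0) := by
    intro j
    obtain ⟨S, hS, hjS, hj1S, hSβ⟩ := hjoin _ _ (hstep j)
    by_cases hj : N ≤ j
    · have hβ : 0 ≤ β := by simpa using hSβ hjS
      refine ⟨0, fun _ => u j, ⟨rfl, fun i _ => ?_, fun i => by simpa using hθ'⟩,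
        fun i => by simpa using hβ, fun _ => rfl⟩
      rw [huN j hj, huN (j + 1) (by omega)]
    · obtain ⟨L, c, hc, hcS⟩ := hS.exists_isDistChain hθ' hjS hj1S
      exact ⟨L, c, hc, fun i => hSβ (hcS i), fun h => absurd h hj⟩
  choose L c hc hcβ hL using hlink
  set M := (Finset.range N).sup L + 1
  have hM : 0 < M := Nat.succ_pos _
  have hLM : ∀ j, L j ≤ M := fun j => by
    by_cases hj : N ≤ j
    · rw [hL j hj]
      exact Nat.zero_le _
    · exact (Finset.le_sup (Finset.mem_range.2 (not_le.1 hj))).trans (Nat.le_succ _)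
  refine ⟨N * M, _, isDistChain_blocks hM huN hc hLM hL, fun t ht => ?_⟩
  have hfloor : ⌊t * ↑(N * M)⌋₊ / M = ⌊t * N⌋₊ := by
    rw [← Nat.floor_div_natCast]
    congr 1
    push_cast
    field_simp
  rw [hfloor]
  exact hcβ _ _

theorem exists_isPreconnected_subset_closedBall [CompactSpace X] [LocallyConnectedSpace X]
    {η : ℝ} (hη : 0 < η) : ∃ θ > 0, θ ≤ η ∧ ∀ p q : X, dist p q < θ →
      ∃ S, IsPreconnected S ∧ p ∈ S ∧ q ∈ S ∧ S ⊆ closedBall p η := by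
  have hV : ∀ x : X, ∃ V, V ⊆ ball x (η / 2) ∧ IsOpen V ∧ x ∈ V ∧ IsConnected V := fun x =>
    locallyConnectedSpace_iff_subsets_isOpen_isConnected.mp ‹_› x _ (ball_mem_nhds x (half_pos hη))
  choose V hVball hVopen hVmem hVconn using hV
  obtain ⟨θ, hθ, hcov⟩ := lebesgue_number_lemma_of_metric isCompact_univ hVopen
    fun x _ => mem_iUnion.2 ⟨x, hVmem x⟩
  refine ⟨min θ η, lt_min hθ hη, min_le_right _ _, fun p q hpq => ?_⟩
  obtain ⟨z, hz⟩ := hcov p (mem_univ p)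
  have hp : p ∈ V z := hz (mem_ball_self hθ)
  refine ⟨V z, (hVconn z).isPreconnected, hp, hz (mem_ball'.2 (hpq.trans_le (min_le_left _ _))),
    fun r hr => ?_⟩
  exact mem_closedBall.2 (by
    linarith [mem_ball.1 (hVball z hr), mem_ball.1 (hVball z hp), dist_triangle_right r p z])

theorem exists_seq_isDistChain {θ β : ℕ → ℝ} (hθ : ∀ n, 0 < θ n)
    (hjoin : ∀ n, ∀ p q : X, dist p q < θ n →
      ∃ S, IsPreconnected S ∧ p ∈ S ∧ q ∈ S ∧ S ⊆ closedBall p (β n))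
    {x y : X} (hxy : dist x y < θ 0) :
    ∃ (N : ℕ → ℕ) (u : ℕ → ℕ → X), (∀ i, dist (u 0 i) x < θ 0) ∧
      ∀ n, IsDistChain (θ n) (N n) (u n) x y ∧
        ∀ t ∈ Icc (0 : ℝ) 1, dist (u (n + 1) ⌊t * N (n + 1)⌋₊) (u n ⌊t * N n⌋₊) ≤ β n := by
  have hnext : ∀ n (p : ℕ × (ℕ → X)), ∃ q : ℕ × (ℕ → X), IsDistChain (θ n) p.1 p.2 x y →
      IsDistChain (θ (n + 1)) q.1 q.2 x y ∧
        ∀ t ∈ Icc (0 : ℝ) 1, dist (q.2 ⌊t * q.1⌋₊) (p.2 ⌊t * p.1⌋₊) ≤ β n := by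
    intro n p
    by_cases hp : IsDistChain (θ n) p.1 p.2 x y
    · obtain ⟨N', u', h⟩ := hp.refine (hθ (n + 1)) (hjoin n)
      exact ⟨(N', u'), fun _ => h⟩
    · exact ⟨p, fun h => absurd h hp⟩
  choose next hnext using hnext
  let seq : ℕ → ℕ × (ℕ → X) := fun n =>
    Nat.rec (1, fun i => if i = 0 then x else y) (fun n p => next n p) n
  have hseq : ∀ n, IsDistChain (θ n) (seq n).1 (seq n).2 x y := by
    intro n
    induction n with
    | zero => exact isDistChain_pair (hθ 0) hxy
    | succ n ih => exact (hnext n _ ih).1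
  refine ⟨fun n => (seq n).1, fun n => (seq n).2, fun i => ?_,
    fun n => ⟨hseq n, (hnext n _ (hseq n)).2⟩⟩
  rcases i with _ | i
  · simpa [seq] using hθ 0
  · simpa [seq, dist_comm] using hxy

theorem exists_uniformContinuousOn_tendsto_of_dist_le_geometric_two [CompleteSpace X]
    {α : Type*} [PseudoMetricSpace α] {s : Set α} {v : ℕ → α → X} {C : ℝ}
    (hstep : ∀ n, ∀ t ∈ s, dist (v n t) (v (n + 1) t) ≤ C / 2 / 2 ^ n)
    (hosc : ∀ n, ∃ δ > 0, ∀ a ∈ s, ∀ b ∈ s, dist a b < δ → dist (v n a) (v n b) ≤ C / 2 ^ n) :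
    ∃ f : α → X, UniformContinuousOn f s ∧ ∀ t ∈ s,
      Tendsto (fun n => v n t) atTop (𝓝 (f t)) ∧ ∀ n, dist (v n t) (f t) ≤ C / 2 ^ n := by
  have hlim : ∀ t, ∃ l, t ∈ s → Tendsto (fun n => v n t) atTop (𝓝 l) := fun t => by
    by_cases ht : t ∈ s
    · obtain ⟨l, hl⟩ := cauchySeq_tendsto_of_complete (cauchySeq_of_le_geometric_two (hstep · t ht))
      exact ⟨l, fun _ => hl⟩
    · exact ⟨v 0 t, fun h => absurd h ht⟩
  choose f hf using hlim
  have hdist : ∀ t ∈ s, ∀ n, dist (v n t) (f t) ≤ C / 2 ^ n := fun t ht =>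
    dist_le_of_le_geometric_two_of_tendsto (hstep · t ht) (hf t ht)
  refine ⟨f, Metric.uniformContinuousOn_iff.2 fun ε hε => ?_, fun t ht => ⟨hf t ht, hdist t ht⟩⟩
  have hC : Tendsto (fun n : ℕ => C / 2 ^ n) atTop (𝓝 0) :=
    tendsto_const_nhds.div_atTop (tendsto_pow_atTop_atTop_of_one_lt one_lt_two)
  obtain ⟨n, hn⟩ := (hC.eventually (gt_mem_nhds (by positivity : 0 < ε / 3))).exists
  obtain ⟨δ, hδ, hvδ⟩ := hosc n
  refine ⟨δ, hδ, fun a ha b hb hab => ?_⟩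
  calc dist (f a) (f b) ≤ dist (v n a) (f a) + dist (v n a) (v n b) + dist (v n b) (f b) := by
        linarith [dist_triangle4 (f a) (v n a) (v n b) (f b), dist_comm (f a) (v n a)]
    _ ≤ C / 2 ^ n + C / 2 ^ n + C / 2 ^ n := by
        gcongr
        · exact hdist a ha n
        · exact hvδ a ha b hb hab
        · exact hdist b hb n
    _ < ε := by linarith

theorem exists_path_diam_lt [CompactSpace X] [LocallyConnectedSpace X] {ε : ℝ} (hε : 0 < ε) :
    ∃ δ > 0, ∀ x y : X, dist x y < δ → ∃ f : ℝ → X, ContinuousOn f (Icc 0 1) ∧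
      f 0 = x ∧ f 1 = y ∧ diam (f '' Icc 0 1) < ε := by
  have hC : 0 < ε / 4 := by positivity
  have hβ : ∀ n : ℕ, 0 < ε / 4 / 2 / 2 ^ n := fun n => by positivity
  choose θ hθ hθβ hjoin using fun n => exists_isPreconnected_subset_closedBall (X := X) (hβ n)
  refine ⟨θ 0, hθ 0, fun x y hxy => ?_⟩
  obtain ⟨N, u, hu₀, hu⟩ := exists_seq_isDistChain hθ hjoin hxy
  -- at scale `1 / (N + 1)` the floors `⌊t N⌋` move by at most one step of the chain
  have hosc : ∀ n, ∀ a ∈ Icc (0 : ℝ) 1, ∀ b, a ≤ b → dist a b < 1 / (N n + 1) →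
      dist (u n ⌊a * N n⌋₊) (u n ⌊b * N n⌋₊) ≤ ε / 4 / 2 ^ n := fun n a ha b hab h => by
    rw [Real.dist_eq, abs_sub_comm, abs_of_nonneg (sub_nonneg.2 hab),
      lt_div_iff₀ (by positivity)] at h
    refine ((hu n).1.dist_floor_lt ha.1 hab (by linarith)).le.trans ((hθβ n).trans ?_)
    exact div_le_div_of_nonneg_right (half_le_self hC.le) (by positivity)
  obtain ⟨f, hf, hlim⟩ := exists_uniformContinuousOn_tendsto_of_dist_le_geometric_two
    (s := Icc (0 : ℝ) 1) (v := fun n t => u n ⌊t * N n⌋₊)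
    (fun n t ht => by rw [dist_comm]; exact (hu n).2 t ht) fun n =>
      ⟨1 / (N n + 1), by positivity, fun a ha b hb hab => (le_total a b).elim
        (fun h => hosc n a ha b h hab)
        fun h => dist_comm (u n _) (u n _) ▸ hosc n b hb a h (dist_comm a b ▸ hab)⟩
  have hend : ∀ t ∈ Icc (0 : ℝ) 1, ∀ z, (∀ n, u n ⌊t * N n⌋₊ = z) → f t = z := fun t ht z hz =>
    tendsto_nhds_unique (hlim t ht).1 (by simpa only [hz] using tendsto_const_nhds)
  refine ⟨f, hf.continuousOn, hend 0 (left_mem_Icc.2 zero_le_one) x fun n => ?_,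
    hend 1 (right_mem_Icc.2 zero_le_one) y fun n => ?_, ?_⟩
  · simpa using (hu n).1.1
  · simpa using (hu n).1.2.1 _ le_rfl
  have hθ₀ : θ 0 ≤ ε / 4 / 2 := by simpa using hθβ 0
  have hball : f '' Icc 0 1 ⊆ closedBall x (ε / 4 + θ 0) := by
    rintro _ ⟨t, ht, rfl⟩
    have h₁ := (hlim t ht).2 0
    have h₂ := hu₀ ⌊t * N 0⌋₊
    rw [pow_zero, div_one, dist_comm] at h₁
    exact mem_closedBall.2 (by linarith [dist_triangle (f t) (u 0 ⌊t * N 0⌋₊) x])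
  calc diam (f '' Icc 0 1) ≤ 2 * (ε / 4 + θ 0) :=
        (diam_mono hball isBounded_closedBall).trans (diam_closedBall (by linarith [hθ 0]))
    _ < ε := by linarith

end Chains

end PathsAndArcs

theorem peano_continuum_ULAC_general {X : Type*} [MetricSpace X]
    [CompactSpace X] [LocallyConnectedSpace X] :
    ∀ ε : ℝ, 0 < ε → ∃ δ : ℝ, 0 < δ ∧
      ∀ x y : X, x ≠ y → dist x y < δ →
        ∃ A : Set X, IsArcIn A x y ∧ Metric.diam A < ε := by
  intro ε hε
  obtain ⟨δ, hδ, hpath⟩ := exists_path_diam_lt (X := X) hε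
  refine ⟨δ, hδ, fun x y hxy hdist => ?_⟩
  obtain ⟨f, hf, rfl, rfl, hdiam⟩ := hpath x y hdist
  obtain ⟨A, hA, hAf⟩ := hf.exists_isArcIn_subset_image hxy
  exact ⟨A, hA, (diam_mono hAf (isCompact_Icc.image_of_continuousOn hf).isBounded).trans_lt hdiam⟩

theorem peano_continuum_ULAC {X : Type*} [MetricSpace X]
    [CompactSpace X] [ConnectedSpace X] [LocallyConnectedSpace X] :
    ∀ ε : ℝ, 0 < ε → ∃ δ : ℝ, 0 < δ ∧
      ∀ x y : X, x ≠ y → dist x y < δ →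
        ∃ A : Set X, IsArcIn A x y ∧ Metric.diam A < ε :=
  peano_continuum_ULAC_general
end

section
/- Let X ⊆ ℝ^n be a continuum with increasing LC function f. Let ω = (m, R_1, …, R_k) be a witnessing chain, and let 1 ≤ i ≤ k. Then for all x, y ∈ R_i ∩ X, the connected component of x in B_{2^{-m}}(R_i) ∩ X equals the connected component of y in B_{2^{-m}}(R_i) ∩ X. -/
/-!
Two points `x, y` of `R_i ∩ X` are at distance less than `diam R_i < 2^{-f(m)}`, so local
connectedness puts `y` in the component of `x` in `X ∩ B_{2^{-m}}(x)`. That set lies inside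
`B_{2^{-m}}(R_i) ∩ X`, so `x` and `y` share a component there as well.
-/

/-- A rational box in `ℝ^n`: a product of open intervals with rational endpoints. -/
def IsRatBox {n : ℕ} (R : Set (EuclideanSpace ℝ (Fin n))) : Prop :=
  ∃ a b : Fin n → ℚ, (∀ i, (a i : ℝ) < b i) ∧
    R = {x | ∀ i, (a i : ℝ) < x i ∧ x i < (b i : ℝ)}

open Metric Set

lemma IsRatBox.isBounded {n : ℕ} {R : Set (EuclideanSpace ℝ (Fin n))} (h : IsRatBox R) :
    Bornology.IsBounded R := by
  obtain ⟨a, b, -, rfl⟩ := h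
  refine ((isCompact_univ_pi fun i => isCompact_Icc (a := (a i : ℝ)) (b := b i)).image
    (PiLp.continuous_toLp 2 _)).isBounded.subset ?_
  intro x hx
  exact ⟨WithLp.ofLp x, fun i _ => ⟨(hx i).1.le, (hx i).2.le⟩, rfl⟩

lemma Metric.inter_ball_subset_biUnion_ball_inter {α : Type*} [PseudoMetricSpace α]
    {X S : Set α} {x : α} (hx : x ∈ S) (r : ℝ) :
    X ∩ ball x r ⊆ (⋃ p ∈ S, ball p r) ∩ X :=
  fun _ ⟨hzX, hz⟩ => ⟨mem_biUnion hx hz, hzX⟩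

theorem witnessing_chain_component_independent_general {n : ℕ}
    (X : Set (EuclideanSpace ℝ (Fin n)))
    (f : ℕ → ℕ)
    (hLC : ∀ k : ℕ, ∀ p ∈ X,
      X ∩ Metric.ball p ((2 : ℝ) ^ (-(f k : ℤ))) ⊆
        connectedComponentIn (X ∩ Metric.ball p ((2 : ℝ) ^ (-(k : ℤ)))) p)
    (m k : ℕ) (R : Fin (k + 1) → Set (EuclideanSpace ℝ (Fin n)))
    (hbox : ∀ i, IsRatBox (R i))
    (hdiam : ∀ i, Metric.diam (R i) < (2 : ℝ) ^ (-(f m : ℤ)))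
    (i : Fin (k + 1)) :
    ∀ x ∈ R i ∩ X, ∀ y ∈ R i ∩ X,
      connectedComponentIn ((⋃ p ∈ R i, Metric.ball p ((2 : ℝ) ^ (-(m : ℤ)))) ∩ X) x =
      connectedComponentIn ((⋃ p ∈ R i, Metric.ball p ((2 : ℝ) ^ (-(m : ℤ)))) ∩ X) y := by
  intro x hx y hy
  have hyx : dist y x < (2 : ℝ) ^ (-(f m : ℤ)) :=
    (dist_le_diam_of_mem (hbox i).isBounded hy.1 hx.1).trans_lt (hdiam i)
  have hy_local : y ∈ connectedComponentIn (X ∩ ball x ((2 : ℝ) ^ (-(m : ℤ)))) x :=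
    hLC m x hx.2 ⟨hy.2, hyx⟩
  exact connectedComponentIn_eq
    (connectedComponentIn_mono x (inter_ball_subset_biUnion_ball_inter hx.1 _) hy_local)

theorem witnessing_chain_component_independent {n : ℕ}
    (X : Set (EuclideanSpace ℝ (Fin n)))
    (hXcompact : IsCompact X) (hXconn : IsConnected X)
    (f : ℕ → ℕ) (hf : Monotone f)
    (hLC : ∀ k : ℕ, ∀ p ∈ X,
      X ∩ Metric.ball p ((2 : ℝ) ^ (-(f k : ℤ))) ⊆
        connectedComponentIn (X ∩ Metric.ball p ((2 : ℝ) ^ (-(k : ℤ)))) p)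
    (m k : ℕ) (R : Fin (k + 1) → Set (EuclideanSpace ℝ (Fin n)))
    (hbox : ∀ i, IsRatBox (R i))
    (hchain : ∀ i : Fin k, (R i.castSucc ∩ R i.succ ∩ X).Nonempty)
    (hdiam : ∀ i, Metric.diam (R i) < (2 : ℝ) ^ (-(f m : ℤ)))
    (i : Fin (k + 1)) :
    ∀ x ∈ R i ∩ X, ∀ y ∈ R i ∩ X,
      connectedComponentIn ((⋃ p ∈ R i, Metric.ball p ((2 : ℝ) ^ (-(m : ℤ)))) ∩ X) x =
      connectedComponentIn ((⋃ p ∈ R i, Metric.ball p ((2 : ℝ) ^ (-(m : ℤ)))) ∩ X) y :=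
  witnessing_chain_component_independent_general X f hLC m k R hbox hdiam i
end

section
/- Let X ⊆ ℝ^n be a continuum with increasing LC function f, let U ⊆ ℝ^n be open, and let x, y be distinct points in the same connected component of U ∩ X. Then there is a witnessing chain ω = (m, R_1, …, R_k) from x to y (i.e., x ∈ R_1 ∩ X and y ∈ R_k ∩ X) such that the closure of V_ω = ⋃_{i=1}^k B_{2^{-m}}(R_i) is contained in U. -/
open Set Metric

def IsLCFunction {E : Type*} [PseudoMetricSpace E] (X : Set E) (f : ℕ → ℕ) : Prop :=
  ∀ k : ℕ, ∀ p ∈ X, X ∩ ball p ((2 : ℝ) ^ (-(f k : ℤ))) ⊆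
    connectedComponentIn (X ∩ ball p ((2 : ℝ) ^ (-(k : ℤ)))) p

theorem exists_two_zpow_neg_lt {ε : ℝ} (hε : 0 < ε) : ∃ m : ℕ, (2 : ℝ) ^ (-(m : ℤ)) < ε := by
  obtain ⟨m, hm⟩ := exists_pow_lt_of_lt_one hε (by norm_num : (2⁻¹ : ℝ) < 1)
  exact ⟨m, by rwa [zpow_neg, zpow_natCast, ← inv_pow]⟩

theorem IsPreconnected.exists_chain {E : Type*} [PseudoMetricSpace E] {K : Set E}
    (hK : IsPreconnected K) {x y : E} (hx : x ∈ K) (hy : y ∈ K) {ε : ℝ} (hε : 0 < ε) :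
    ∃ (k : ℕ) (p : Fin (k + 1) → E), p 0 = x ∧ p (Fin.last k) = y ∧ (∀ i, p i ∈ K) ∧
      ∀ i : Fin k, dist (p i.castSucc) (p i.succ) < ε := by
  let Q : E → Prop := fun z => ∃ (k : ℕ) (p : Fin (k + 1) → E), p 0 = x ∧ p (Fin.last k) = z ∧
    (∀ i, p i ∈ K) ∧ ∀ i : Fin k, dist (p i.castSucc) (p i.succ) < ε
  have extend : ∀ z, Q z → ∀ w ∈ K, dist z w < ε → Q w := by
    rintro z ⟨k, p, hp0, hpz, hpK, hpε⟩ w hw hzw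
    refine ⟨k + 1, Fin.snoc p w, ?_, Fin.snoc_last .., Fin.lastCases ?_ fun i => ?_,
      Fin.lastCases ?_ fun i => ?_⟩
    · rw [← Fin.castSucc_zero, Fin.snoc_castSucc, hp0]
    · simpa using hw
    · simpa using hpK i
    · rwa [Fin.succ_last, Fin.snoc_last, Fin.snoc_castSucc, hpz]
    · rw [Fin.succ_castSucc, Fin.snoc_castSucc, Fin.snoc_castSucc]; exact hpε i
  refine hK.induction₂' (fun a b => Q a → Q b) (fun z hz => ?_)
    (fun _ _ _ _ _ _ hab hbc => hbc ∘ hab) hx hy ⟨0, fun _ => x, rfl, rfl, fun _ => hx, Fin.elim0⟩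
  filter_upwards [self_mem_nhdsWithin, mem_nhdsWithin_of_mem_nhds (ball_mem_nhds z hε)]
    with w hwK hwz
  exact ⟨fun hz' => extend z hz' w hwK (mem_ball'.1 hwz), fun hw' => extend w hw' z hz hwz⟩

theorem IsLCFunction.exists_isCompact_isPreconnected_nhds {E : Type*} [MetricSpace E]
    {X : Set E} {f : ℕ → ℕ} (hLC : IsLCFunction X f) (hX : IsCompact X) {V : Set E}
    (hV : IsOpen V) {z : E} (hz : z ∈ V ∩ X) :
    ∃ L, IsCompact L ∧ IsPreconnected L ∧ L ⊆ V ∩ X ∧ ∃ ε > 0, X ∩ ball z ε ⊆ L := by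
  obtain ⟨δ, hδ, hδV⟩ := isOpen_iff.1 hV z hz.1
  obtain ⟨k, hk⟩ := exists_two_zpow_neg_lt hδ
  set D := connectedComponentIn (X ∩ ball z ((2 : ℝ) ^ (-(k : ℤ)))) z
  have hD : closure D ⊆ X ∩ closedBall z ((2 : ℝ) ^ (-(k : ℤ))) :=
    closure_minimal ((connectedComponentIn_subset _ _).trans
      (inter_subset_inter_right _ ball_subset_closedBall)) (hX.isClosed.inter isClosed_closedBall)
  exact ⟨closure D, hX.of_isClosed_subset isClosed_closure (hD.trans inter_subset_left),
    isPreconnected_connectedComponentIn.closure,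
    fun w hw => ⟨hδV (closedBall_subset_ball hk (hD hw).2), (hD hw).1⟩,
    _, zpow_pos two_pos _, (hLC k z hz.2).trans subset_closure⟩

theorem IsLCFunction.exists_isCompact_isPreconnected_of_mem_connectedComponentIn
    {E : Type*} [MetricSpace E] {X : Set E} {f : ℕ → ℕ} (hLC : IsLCFunction X f)
    (hX : IsCompact X) {U : Set E} (hU : IsOpen U) {x y : E} (hx : x ∈ U ∩ X)
    (hy : y ∈ connectedComponentIn (U ∩ X) x) :
    ∃ K, IsCompact K ∧ IsPreconnected K ∧ x ∈ K ∧ y ∈ K ∧ K ⊆ U ∩ X := by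
  refine isPreconnected_connectedComponentIn.induction₂'
    (fun a b => ∃ K, IsCompact K ∧ IsPreconnected K ∧ a ∈ K ∧ b ∈ K ∧ K ⊆ U ∩ X)
    (fun z hz => ?_) ?_ (mem_connectedComponentIn hx) hy
  · obtain ⟨L, hLc, hLp, hLUX, ε, hε, hXL⟩ :=
      hLC.exists_isCompact_isPreconnected_nhds hX hU (connectedComponentIn_subset _ _ hz)
    have hzL : z ∈ L := hXL ⟨(connectedComponentIn_subset _ _ hz).2, mem_ball_self hε⟩
    filter_upwards [self_mem_nhdsWithin, mem_nhdsWithin_of_mem_nhds (ball_mem_nhds z hε)]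
      with w hw hwz
    have hwL : w ∈ L := hXL ⟨(connectedComponentIn_subset _ _ hw).2, hwz⟩
    exact ⟨⟨L, hLc, hLp, hzL, hwL, hLUX⟩, ⟨L, hLc, hLp, hwL, hzL, hLUX⟩⟩
  · rintro a b c - - - ⟨K₁, hK₁c, hK₁p, haK₁, hbK₁, hK₁⟩ ⟨K₂, hK₂c, hK₂p, hbK₂, hcK₂, hK₂⟩
    exact ⟨K₁ ∪ K₂, hK₁c.union hK₂c, hK₁p.union b hbK₁ hbK₂ hK₂p, .inl haK₁, .inr hcK₂,
      union_subset hK₁ hK₂⟩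

theorem exists_pos_forall_exists_isRatBox {n : ℕ} {ρ : ℝ} (hρ : 0 < ρ) :
    ∃ η > 0, ∀ c : EuclideanSpace ℝ (Fin n),
      ∃ R, IsRatBox R ∧ ball c η ⊆ R ∧ R ⊆ closedBall c ρ := by
  -- the sup-distance controls the Euclidean one uniformly
  obtain ⟨η, hη, hsup⟩ :=
    uniformContinuous_iff.1 (PiLp.uniformContinuous_toLp 2 fun _ : Fin n => ℝ) ρ hρ
  refine ⟨η / 2, half_pos hη, fun c => ?_⟩
  have hlo (i : Fin n) : ∃ q : ℚ, c i - η < q ∧ (q : ℝ) < c i - η / 2 :=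
    exists_rat_btwn (by linarith)
  have hhi (i : Fin n) : ∃ q : ℚ, c i + η / 2 < q ∧ (q : ℝ) < c i + η :=
    exists_rat_btwn (by linarith)
  choose a ha₁ ha₂ using hlo
  choose b hb₁ hb₂ using hhi
  refine ⟨_, ⟨a, b, fun i => by linarith [ha₂ i, hb₁ i], rfl⟩, fun w hw i => ?_, fun w hw => ?_⟩
  · have := abs_lt.1 ((Real.dist_eq _ _).symm.trans_lt
      ((PiLp.dist_apply_le w c i).trans_lt (mem_ball.1 hw)))
    exact ⟨by linarith [ha₂ i], by linarith [hb₁ i]⟩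
  · refine mem_closedBall.2 (hsup ((dist_pi_lt_iff hη).2 fun i => ?_)).le
    rw [Real.dist_eq, abs_lt]
    exact ⟨by linarith [(hw i).1, ha₁ i], by linarith [(hw i).2, hb₂ i]⟩

theorem closure_iUnion_biUnion_ball_subset {E ι : Type*} [PseudoMetricSpace E] [Finite ι]
    {S : ι → Set E} {c : ι → E} {ρ : ℝ} (hS : ∀ i, S i ⊆ closedBall (c i) ρ) (r : ℝ) :
    closure (⋃ i, ⋃ p ∈ S i, ball p r) ⊆ ⋃ i, closedBall (c i) (r + ρ) :=
  closure_minimal (iUnion_mono fun i => iUnion₂_subset fun _ hp => ball_subset_closedBall.trans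
      (closedBall_subset_closedBall' (by linarith [mem_closedBall.1 (hS i hp)])))
    (isClosed_iUnion_of_finite fun _ => isClosed_closedBall)

theorem exists_witnessing_chain_general {n : ℕ}
    (X : Set (EuclideanSpace ℝ (Fin n)))
    (hXcompact : IsCompact X)
    (f : ℕ → ℕ)
    (hLC : ∀ k : ℕ, ∀ p ∈ X,
      X ∩ Metric.ball p ((2 : ℝ) ^ (-(f k : ℤ))) ⊆
        connectedComponentIn (X ∩ Metric.ball p ((2 : ℝ) ^ (-(k : ℤ)))) p)
    (U : Set (EuclideanSpace ℝ (Fin n))) (hU : IsOpen U)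
    (x y : EuclideanSpace ℝ (Fin n))
    (hx : x ∈ U ∩ X) (hy : y ∈ connectedComponentIn (U ∩ X) x) :
    ∃ (m k : ℕ) (R : Fin (k + 1) → Set (EuclideanSpace ℝ (Fin n))),
      (∀ i, IsRatBox (R i)) ∧
      (∀ i : Fin k, (R i.castSucc ∩ R i.succ ∩ X).Nonempty) ∧
      (∀ i, Metric.diam (R i) < (2 : ℝ) ^ (-(f m : ℤ))) ∧
      x ∈ R 0 ∩ X ∧ y ∈ R (Fin.last k) ∩ X ∧
      closure (⋃ i, ⋃ p ∈ R i, Metric.ball p ((2 : ℝ) ^ (-(m : ℤ)))) ⊆ U := by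
  obtain ⟨K, hKc, hKp, hxK, hyK, hKUX⟩ :=
    IsLCFunction.exists_isCompact_isPreconnected_of_mem_connectedComponentIn
      hLC hXcompact hU hx hy
  obtain ⟨δ, hδ, hKδ⟩ := hKc.exists_thickening_subset_open hU fun z hz => (hKUX hz).1
  obtain ⟨m, hm⟩ := exists_two_zpow_neg_lt (half_pos hδ)
  -- outer radius of the boxes: `2ρ < 2^{-f m}` bounds their diameters, `2^{-m} + ρ < δ` keeps
  -- their `2^{-m}`-neighbourhoods inside `B_δ(K)`
  set ρ := min ((2 : ℝ) ^ (-(f m : ℤ))) δ / 4 with hρ_def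
  have hρ : 0 < ρ := by positivity
  obtain ⟨η, hη, hbox⟩ := exists_pos_forall_exists_isRatBox (n := n) hρ
  obtain ⟨k, c, hc0, hck, hcK, hcη⟩ := hKp.exists_chain hxK hyK hη
  choose R hR hηR hRρ using fun i => hbox (c i)
  have hcR (i : Fin (k + 1)) : c i ∈ R i := hηR i (mem_ball_self hη)
  refine ⟨m, k, R, hR, fun i => ⟨c i.succ, ⟨hηR _ (mem_ball'.2 (hcη i)), hcR _⟩, (hKUX (hcK _)).2⟩,
    fun i => ?_, ⟨hc0 ▸ hcR 0, hx.2⟩, ⟨hck ▸ hcR _, (hKUX hyK).2⟩, ?_⟩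
  · calc diam (R i) ≤ diam (closedBall (c i) ρ) := diam_mono (hRρ i) isBounded_closedBall
      _ ≤ 2 * ρ := diam_closedBall hρ.le
      _ < (2 : ℝ) ^ (-(f m : ℤ)) := by
        linarith [min_le_left ((2 : ℝ) ^ (-(f m : ℤ))) δ,
          zpow_pos (two_pos : (0 : ℝ) < 2) (-(f m : ℤ))]
  · refine (closure_iUnion_biUnion_ball_subset hRρ _).trans (iUnion_subset fun i => ?_)
    refine (closedBall_subset_ball ?_).trans ((ball_subset_thickening (hcK i) δ).trans hKδ)
    linarith [min_le_right ((2 : ℝ) ^ (-(f m : ℤ))) δ]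

theorem exists_witnessing_chain {n : ℕ}
    (X : Set (EuclideanSpace ℝ (Fin n)))
    (hXcompact : IsCompact X) (hXconn : IsConnected X)
    (f : ℕ → ℕ) (hf : Monotone f)
    (hLC : ∀ k : ℕ, ∀ p ∈ X,
      X ∩ Metric.ball p ((2 : ℝ) ^ (-(f k : ℤ))) ⊆
        connectedComponentIn (X ∩ Metric.ball p ((2 : ℝ) ^ (-(k : ℤ)))) p)
    (U : Set (EuclideanSpace ℝ (Fin n))) (hU : IsOpen U)
    (x y : EuclideanSpace ℝ (Fin n)) (hxy : x ≠ y)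
    (hx : x ∈ U ∩ X) (hy : y ∈ connectedComponentIn (U ∩ X) x) :
    ∃ (m k : ℕ) (R : Fin (k + 1) → Set (EuclideanSpace ℝ (Fin n))),
      (∀ i, IsRatBox (R i)) ∧
      (∀ i : Fin k, (R i.castSucc ∩ R i.succ ∩ X).Nonempty) ∧
      (∀ i, Metric.diam (R i) < (2 : ℝ) ^ (-(f m : ℤ))) ∧
      x ∈ R 0 ∩ X ∧ y ∈ R (Fin.last k) ∩ X ∧
      closure (⋃ i, ⋃ p ∈ R i, Metric.ball p ((2 : ℝ) ^ (-(m : ℤ)))) ⊆ U :=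
  exists_witnessing_chain_general X hXcompact f hLC U hU x y hx hy
end

section
/- Let h : [0,1] → ℝ^n be a homeomorphism onto its image A (an arc). Let m be a modulus of continuity for h and m₁ a modulus of continuity for h⁻¹ : A → [0,1]. Then g = m₁ ∘ m is an LC function for A: for every k ∈ ℕ and p ∈ A, A ∩ B_{2^{-g(k)}}(p) is contained in the connected component of p in A ∩ B_{2^{-k}}(p). -/
/-! Two points `h s, h t` of `A` that are `2^{-m₁(m k)}`-close have parameters `s, t` that are
`2^{-m k}`-close, so the whole subarc `h '' [[s, t]]` stays `2^{-k}`-close to `h s`. This subarc is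
connected, hence lies in the component of `h s` in `A ∩ B_{2^{-k}}(h s)`. -/

open Set
open scoped Interval

theorem mem_connectedComponentIn_of_image_uIcc_subset {α X : Type*}
    [ConditionallyCompleteLinearOrder α] [DenselyOrdered α] [TopologicalSpace α] [OrderTopology α]
    [TopologicalSpace X] {f : α → X} {S : Set α} (hS : S.OrdConnected) (hf : ContinuousOn f S)
    {U : Set X} {s t : α} (hs : s ∈ S) (ht : t ∈ S) (hU : f '' [[s, t]] ⊆ U) :
    f t ∈ connectedComponentIn U (f s) :=
  (isPreconnected_uIcc.image f (hf.mono (hS.uIcc_subset hs ht))).subset_connectedComponentIn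
    (mem_image_of_mem f left_mem_uIcc) hU (mem_image_of_mem f right_mem_uIcc)

theorem modulus_gives_lc_function_general {n : ℕ}
    (h : ℝ → EuclideanSpace ℝ (Fin n))
    (hcont : ContinuousOn h (Set.Icc 0 1))
    (A : Set (EuclideanSpace ℝ (Fin n))) (hA : h '' Set.Icc 0 1 = A)
    (m m₁ : ℕ → ℕ)
    (hm : ∀ k : ℕ, ∀ s ∈ Set.Icc (0:ℝ) 1, ∀ t ∈ Set.Icc (0:ℝ) 1,
      |s - t| ≤ (2 : ℝ) ^ (-(m k : ℤ)) → dist (h s) (h t) < (2 : ℝ) ^ (-(k : ℤ)))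
    (hm₁ : ∀ k : ℕ, ∀ s ∈ Set.Icc (0:ℝ) 1, ∀ t ∈ Set.Icc (0:ℝ) 1,
      dist (h s) (h t) ≤ (2 : ℝ) ^ (-(m₁ k : ℤ)) → |s - t| < (2 : ℝ) ^ (-(k : ℤ))) :
    ∀ k : ℕ, ∀ p ∈ A,
      A ∩ Metric.ball p ((2 : ℝ) ^ (-(m₁ (m k) : ℤ))) ⊆
        connectedComponentIn (A ∩ Metric.ball p ((2 : ℝ) ^ (-(k : ℤ)))) p := by
  subst hA
  rintro k _ ⟨s, hs, rfl⟩ _ ⟨⟨t, ht, rfl⟩, hts⟩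
  have hst : |t - s| < 2 ^ (-(m k : ℤ)) := hm₁ (m k) t ht s hs (Metric.mem_ball.mp hts).le
  refine mem_connectedComponentIn_of_image_uIcc_subset ordConnected_Icc hcont hs ht ?_
  rintro _ ⟨u, hu, rfl⟩
  have hu' : u ∈ Icc (0 : ℝ) 1 := uIcc_subset_Icc hs ht hu
  exact ⟨mem_image_of_mem h hu', hm k u hu' s hs ((abs_sub_left_of_mem_uIcc hu).trans hst.le)⟩

theorem modulus_gives_lc_function {n : ℕ}
    (h : ℝ → EuclideanSpace ℝ (Fin n))
    (hcont : ContinuousOn h (Set.Icc 0 1))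
    (hinj : Set.InjOn h (Set.Icc 0 1))
    (A : Set (EuclideanSpace ℝ (Fin n))) (hA : h '' Set.Icc 0 1 = A)
    (m m₁ : ℕ → ℕ)
    (hm : ∀ k : ℕ, ∀ s ∈ Set.Icc (0:ℝ) 1, ∀ t ∈ Set.Icc (0:ℝ) 1,
      |s - t| ≤ (2 : ℝ) ^ (-(m k : ℤ)) → dist (h s) (h t) < (2 : ℝ) ^ (-(k : ℤ)))
    (hm₁ : ∀ k : ℕ, ∀ s ∈ Set.Icc (0:ℝ) 1, ∀ t ∈ Set.Icc (0:ℝ) 1,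
      dist (h s) (h t) ≤ (2 : ℝ) ^ (-(m₁ k : ℤ)) → |s - t| < (2 : ℝ) ^ (-(k : ℤ))) :
    ∀ k : ℕ, ∀ p ∈ A,
      A ∩ Metric.ball p ((2 : ℝ) ^ (-(m₁ (m k) : ℤ))) ⊆
        connectedComponentIn (A ∩ Metric.ball p ((2 : ℝ) ^ (-(k : ℤ)))) p :=
  modulus_gives_lc_function_general h hcont A hA m m₁ hm hm₁
end

section
/- Let A ⊆ ℝ^n be an arc with parametrization h : [0,1] → A, and suppose the simple chain (V_1, …, V_l) of open subsets of ℝ^n covers A and is a simple chain from x = h(0) to y = h(1). If p_1 ∈ V_i ∩ A is a point of A and A_{2,1} ⊆ A is a subarc of A from a point p_2 ∈ V_1 ∩ A to a point p_3 ∈ V_l ∩ A not containing any point of V_i, then A_{2,1} is disconnected by the open sets ⋃_{j<i} V_j and ⋃_{j>i} V_j — a contradiction; hence every subarc of A from a point of V_1 ∩ A to a point of V_l ∩ A meets every link V_i that contains a point of A. -/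
/-!
A subarc is connected. If it missed the link `V i`, it would be covered by the two open sets
`⋃ j < i, V j` and `⋃ j > i, V j`, which are disjoint because links of a simple chain that are
not adjacent do not meet; a subarc from `V 0` to `V l` meets both, contradicting connectedness.
-/

open Set

section

variable {E : Type*} [TopologicalSpace E] {B : Set E} {p q : E}

theorem IsArcIn.isPreconnected (hB : IsArcIn B p q) : IsPreconnected B := by
  obtain ⟨f, hf, -, rfl, -, -⟩ := hB
  exact isPreconnected_Icc.image f hf

theorem IsArcIn.left_mem (hB : IsArcIn B p q) : p ∈ B := by
  obtain ⟨f, -, -, rfl, rfl, -⟩ := hB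
  exact mem_image_of_mem f ⟨le_rfl, zero_le_one⟩

theorem IsArcIn.right_mem (hB : IsArcIn B p q) : q ∈ B := by
  obtain ⟨f, -, -, rfl, -, rfl⟩ := hB
  exact mem_image_of_mem f ⟨zero_le_one, le_rfl⟩

end

theorem IsPreconnected.inter_nonempty_of_le_of_le {X ι : Type*} [TopologicalSpace X]
    [LinearOrder ι] {V : ι → Set X} {B : Set X} (hB : IsPreconnected B)
    (hopen : ∀ i, IsOpen (V i)) (hcover : B ⊆ ⋃ j, V j) {i j k : ι}
    (hsep : ∀ j k, j < i → i < k → Disjoint (V j) (V k))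
    (hj : (B ∩ V j).Nonempty) (hk : (B ∩ V k).Nonempty) (hji : j ≤ i) (hik : i ≤ k) :
    (B ∩ V i).Nonempty := by
  rcases hji.eq_or_lt with rfl | hji
  · exact hj
  rcases hik.eq_or_lt with rfl | hik
  · exact hk
  by_contra hmiss
  have hsplit : B ⊆ (⋃ j' < i, V j') ∪ ⋃ k' > i, V k' := by
    intro b hb
    obtain ⟨m, hm⟩ := mem_iUnion.mp (hcover hb)
    rcases lt_trichotomy m i with h | rfl | h
    · exact Or.inl (mem_biUnion h hm)
    · exact absurd ⟨b, hb, hm⟩ hmiss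
    · exact Or.inr (mem_biUnion h hm)
  obtain ⟨z, -, hzU, hzW⟩ := hB _ _ (isOpen_biUnion fun m _ => hopen m)
    (isOpen_biUnion fun m _ => hopen m) hsplit
    (hj.mono (inter_subset_inter_right B (subset_biUnion_of_mem hji)))
    (hk.mono (inter_subset_inter_right B (subset_biUnion_of_mem hik)))
  obtain ⟨j', hj'i, hzj'⟩ := mem_iUnion₂.mp hzU
  obtain ⟨k', hik', hzk'⟩ := mem_iUnion₂.mp hzW
  exact (hsep j' k' hj'i hik').ne_of_mem hzj' hzk' rfl

theorem disjoint_of_lt_of_lt_of_simple_chain {X : Type*} {l : ℕ} {V : Fin (l + 1) → Set X}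
    (hsimple : ∀ i j : Fin (l + 1), (V i ∩ V j).Nonempty ↔ |(i : ℤ) - (j : ℤ)| ≤ 1)
    {i j k : Fin (l + 1)} (hji : j < i) (hik : i < k) : Disjoint (V j) (V k) := by
  rw [disjoint_iff_inter_eq_empty, ← not_nonempty_iff_eq_empty, hsimple, abs_le]
  have : (j : ℕ) < i := hji
  have : (i : ℕ) < k := hik
  omega

theorem subarc_meets_every_link_general {n : ℕ} {l : ℕ}
    (A : Set (EuclideanSpace ℝ (Fin n)))
    (V : Fin (l + 1) → Set (EuclideanSpace ℝ (Fin n)))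
    (hopen : ∀ i, IsOpen (V i))
    (hsimple : ∀ i j : Fin (l + 1),
      (V i ∩ V j).Nonempty ↔ |(i : ℤ) - (j : ℤ)| ≤ 1)
    (hcover : A ⊆ ⋃ j, V j) :
    ∀ i : Fin (l + 1), (V i ∩ A).Nonempty →
      ∀ p₂ ∈ V 0 ∩ A, ∀ p₃ ∈ V (Fin.last l) ∩ A,
        ∀ B ⊆ A, IsArcIn B p₂ p₃ → (B ∩ V i).Nonempty := by
  intro i _ p₂ hp₂ p₃ hp₃ B hBA hB
  exact hB.isPreconnected.inter_nonempty_of_le_of_le hopen (hBA.trans hcover)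
    (fun _ _ => disjoint_of_lt_of_lt_of_simple_chain hsimple)
    ⟨p₂, hB.left_mem, hp₂.1⟩ ⟨p₃, hB.right_mem, hp₃.1⟩ (Fin.zero_le i) (Fin.le_last i)

theorem subarc_meets_every_link {n : ℕ} {l : ℕ}
    (A : Set (EuclideanSpace ℝ (Fin n)))
    (x y : EuclideanSpace ℝ (Fin n))
    (hA : IsArcIn A x y)
    (V : Fin (l + 1) → Set (EuclideanSpace ℝ (Fin n)))
    (hopen : ∀ i, IsOpen (V i))
    (hsimple : ∀ i j : Fin (l + 1),
      (V i ∩ V j).Nonempty ↔ |(i : ℤ) - (j : ℤ)| ≤ 1)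
    (hx : x ∈ V 0) (hx' : ∀ j : Fin (l + 1), j ≠ 0 → x ∉ V j)
    (hy : y ∈ V (Fin.last l)) (hy' : ∀ j : Fin (l + 1), j ≠ Fin.last l → y ∉ V j)
    (hcover : A ⊆ ⋃ j, V j) :
    ∀ i : Fin (l + 1), (V i ∩ A).Nonempty →
      ∀ p₂ ∈ V 0 ∩ A, ∀ p₃ ∈ V (Fin.last l) ∩ A,
        ∀ B ⊆ A, IsArcIn B p₂ p₃ → (B ∩ V i).Nonempty :=
  subarc_meets_every_link_general A V hopen hsimple hcover
end
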